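/- arXiv:2511.16157 — 4 statements merged into one kernel-verified Lean document; each statement's English description precedes it below -/
import Mathlib

section
/- If (v_j, ρ_j)_{j∈ℤ} is a nonnegative bounded stationary solution of the city-road system, then each v_j is an affine function v_j(x) = a_j x + b_j whose boundary values are determined by ρ via v_j(0) = (βd/(α(2d+α)))·(((d+α)/d)·ρ_j + ρ_{j+1}) and v_j(1) = (βd/(α(2d+α)))·(ρ_j + ((d+α)/d)·ρ_{j+1}), and the sequence (ρ_j)_{j∈ℤ} satisfies the discrete Fisher-KPP equation (βd/(2d+α))·(ρ_{j−1} − 2ρ_j + ρ_{j+1}) + f(ρ_j) = 0 for all j ∈ ℤ. -/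
/-!
Each road profile has vanishing second derivative, hence is affine, so the two Robin conditions
form a linear system in its endpoint values and slope; solving it expresses `v j 0` and `v j 1`
through `ρ j` and `ρ (j + 1)`. Substituting `v j 0` and `v (j - 1) 1` into the balance law at
city `j` gives the discrete Fisher-KPP equation.
-/

open Set

/-- A nonnegative bounded stationary solution of the city-road system: each `v j` is `C²`
on `[0,1]`, everything is uniformly bounded and nonnegative, `v j` is harmonic on `(0,1)`,
the logistic balance holds at each city, and the Robin boundary conditions hold. -/
def IsStationarySolution (α β d : ℝ) (f : ℝ → ℝ) (v : ℤ → ℝ → ℝ) (ρ : ℤ → ℝ) : Prop :=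
  (∀ j, ContDiffOn ℝ 2 (v j) (Icc 0 1)) ∧
  (∃ C : ℝ, ∀ j, (∀ x ∈ Icc (0:ℝ) 1, |v j x| ≤ C) ∧ |ρ j| ≤ C) ∧
  (∀ j, ∀ x ∈ Icc (0:ℝ) 1, 0 ≤ v j x) ∧ (∀ j, 0 ≤ ρ j) ∧
  (∀ j, ∀ x ∈ Ioo (0:ℝ) 1,
    d * derivWithin (derivWithin (v j) (Icc 0 1)) (Icc 0 1) x = 0) ∧
  (∀ j : ℤ, 0 = f (ρ j) + α * (v j 0 + v (j - 1) 1) - 2 * β * ρ j) ∧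
  (∀ j : ℤ, -d * derivWithin (v j) (Icc 0 1) 0 + α * v j 0 = β * ρ j) ∧
  (∀ j : ℤ, d * derivWithin (v j) (Icc 0 1) 1 + α * v j 1 = β * ρ (j + 1))

section Affine

variable {f : ℝ → ℝ} {a b c : ℝ}

/-- The derivative within `Icc a b` of a `C¹` function is continuous there, so knowing it on
`Ioo a b` pins it down at the endpoints as well. -/
theorem ContDiffOn.eq_affine_of_derivWithin_eq_on_Ioo (hab : a < b)
    (hf : ContDiffOn ℝ 1 f (Icc a b)) (hc : ∀ x ∈ Ioo a b, derivWithin f (Icc a b) x = c) :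
    (∀ x ∈ Icc a b, derivWithin f (Icc a b) x = c) ∧
      ∀ x ∈ Icc a b, f x = f a + c * (x - a) := by
  have hu : UniqueDiffOn ℝ (Icc a b) := uniqueDiffOn_Icc hab
  have hderiv : EqOn (derivWithin f (Icc a b)) (fun _ ↦ c) (Icc a b) :=
    EqOn.of_subset_closure hc (hf.continuousOn_derivWithin hu le_rfl) continuousOn_const
      Ioo_subset_Icc_self (by rw [closure_Ioo hab.ne])
  refine ⟨hderiv, eq_of_derivWithin_eq (hf.differentiableOn one_ne_zero) (by fun_prop) ?_
    (by simp)⟩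
  intro x hx
  have hline : HasDerivWithinAt (fun y ↦ f a + c * (y - a)) c (Icc a b) x := by
    simpa using (((hasDerivAt_id x).sub_const a).const_mul c).hasDerivWithinAt.const_add (f a)
  rw [hderiv (Ico_subset_Icc_self hx), hline.derivWithin (hu x (Ico_subset_Icc_self hx))]

theorem ContDiffOn.eq_affine_of_derivWithin_derivWithin_eq_zero (hab : a < b)
    (hf : ContDiffOn ℝ 2 f (Icc a b))
    (h2 : ∀ x ∈ Ioo a b, derivWithin (derivWithin f (Icc a b)) (Icc a b) x = 0) :
    (∀ x ∈ Icc a b, derivWithin f (Icc a b) x = derivWithin f (Icc a b) a) ∧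
      ∀ x ∈ Icc a b, f x = f a + derivWithin f (Icc a b) a * (x - a) := by
  have hslope : ∀ x ∈ Icc a b, derivWithin f (Icc a b) x = derivWithin f (Icc a b) a := by
    have hf' := hf.derivWithin (uniqueDiffOn_Icc hab) (m := 1) (by norm_num)
    simpa using (hf'.eq_affine_of_derivWithin_eq_on_Ioo hab h2).2
  exact (hf.of_le (by norm_num)).eq_affine_of_derivWithin_eq_on_Ioo hab
    fun x hx ↦ hslope x (Ioo_subset_Icc_self hx)

end Affine

namespace IsStationarySolution

variable {α β d : ℝ} {f : ℝ → ℝ} {v : ℤ → ℝ → ℝ} {ρ : ℤ → ℝ}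

theorem road_eq_affine (hd : d ≠ 0) (hs : IsStationarySolution α β d f v ρ) (j : ℤ) :
    (∀ x ∈ Icc (0 : ℝ) 1, derivWithin (v j) (Icc 0 1) x = derivWithin (v j) (Icc 0 1) 0) ∧
      ∀ x ∈ Icc (0 : ℝ) 1, v j x = v j 0 + derivWithin (v j) (Icc 0 1) 0 * x := by
  obtain ⟨hC2, -, -, -, hharm, -⟩ := hs
  simpa using (hC2 j).eq_affine_of_derivWithin_derivWithin_eq_zero zero_lt_one
    fun x hx ↦ (mul_eq_zero.1 (hharm j x hx)).resolve_left hd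

theorem road_boundary_values (hα : 0 < α) (hd : 0 < d) (hs : IsStationarySolution α β d f v ρ)
    (j : ℤ) :
    v j 0 = β * d / (α * (2 * d + α)) * ((d + α) / d * ρ j + ρ (j + 1)) ∧
      v j 1 = β * d / (α * (2 * d + α)) * (ρ j + (d + α) / d * ρ (j + 1)) := by
  obtain ⟨hslope, haff⟩ := hs.road_eq_affine hd.ne' j
  obtain ⟨-, -, -, -, -, -, hrobin0, hrobin1⟩ := hs
  set s := derivWithin (v j) (Icc 0 1) 0
  have hleft : -d * s + α * v j 0 = β * ρ j := hrobin0 j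
  have hright : d * s + α * v j 1 = β * ρ (j + 1) := by
    rw [← hslope 1 (by simp)]
    exact hrobin1 j
  have hv1 : v j 1 = v j 0 + s := by simpa using haff 1 (by simp)
  have hsum : (2 * d + α) * s = β * (ρ (j + 1) - ρ j) := by
    linear_combination hright - hleft - α * hv1
  have hα' := hα.ne'
  have hd' := hd.ne'
  have h2dα : 2 * d + α ≠ 0 := by positivity
  constructor
  · field_simp
    linear_combination (2 * d + α) * hleft + d * hsum
  · field_simp
    linear_combination (2 * d + α) * hright - d * hsum

theorem discrete_fisherKPP (hα : 0 < α) (hd : 0 < d) (hs : IsStationarySolution α β d f v ρ)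
    (j : ℤ) : β * d / (2 * d + α) * (ρ (j - 1) - 2 * ρ j + ρ (j + 1)) + f (ρ j) = 0 := by
  have hv0 := (hs.road_boundary_values hα hd j).1
  have hv1 := (hs.road_boundary_values hα hd (j - 1)).2
  obtain ⟨-, -, -, -, -, hbalance, -⟩ := hs
  have hbal := hbalance j
  rw [sub_add_cancel] at hv1
  have hα' := hα.ne'
  have hd' := hd.ne'
  have h2dα : 2 * d + α ≠ 0 := by positivity
  rw [hv0, hv1] at hbal
  field_simp at hbal ⊢
  linear_combination -hbal

end IsStationarySolution

theorem stationary_solutions_structure_general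
    (α β d : ℝ) (hα : 0 < α) (hd : 0 < d)
    (f : ℝ → ℝ)
    (v : ℤ → ℝ → ℝ) (ρ : ℤ → ℝ)
    (hstat : IsStationarySolution α β d f v ρ) :
    ∀ j : ℤ,
      (∃ a b : ℝ, ∀ x ∈ Icc (0:ℝ) 1, v j x = a * x + b) ∧
      v j 0 = β * d / (α * (2 * d + α)) * ((d + α) / d * ρ j + ρ (j + 1)) ∧
      v j 1 = β * d / (α * (2 * d + α)) * (ρ j + (d + α) / d * ρ (j + 1)) ∧
      β * d / (2 * d + α) * (ρ (j - 1) - 2 * ρ j + ρ (j + 1)) + f (ρ j) = 0 := by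
  intro j
  have haff := (hstat.road_eq_affine hd.ne' j).2
  obtain ⟨hv0, hv1⟩ := hstat.road_boundary_values hα hd j
  exact ⟨⟨_, _, fun x hx ↦ (haff x hx).trans (add_comm _ _)⟩, hv0, hv1,
    hstat.discrete_fisherKPP hα hd j⟩

/-- **Structure of stationary solutions**: every nonnegative bounded stationary solution of
the city-road system has affine road profiles with boundary values determined by `ρ`, and
`ρ` solves the discrete Fisher-KPP equation. -/
theorem stationary_solutions_structure
    (α β d : ℝ) (hα : 0 < α) (hβ : 0 < β) (hd : 0 < d)
    (f : ℝ → ℝ) (hf : ContDiff ℝ 1 f) (hf0 : f 0 = 0) (hf1 : f 1 = 0)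
    (hfpos : ∀ u ∈ Ioo (0:ℝ) 1, 0 < f u ∧ f u ≤ deriv f 0 * u)
    (hfneg : ∀ u : ℝ, u ∉ Icc (0:ℝ) 1 → f u < 0)
    (v : ℤ → ℝ → ℝ) (ρ : ℤ → ℝ)
    (hstat : IsStationarySolution α β d f v ρ) :
    ∀ j : ℤ,
      (∃ a b : ℝ, ∀ x ∈ Icc (0:ℝ) 1, v j x = a * x + b) ∧
      v j 0 = β * d / (α * (2 * d + α)) * ((d + α) / d * ρ j + ρ (j + 1)) ∧
      v j 1 = β * d / (α * (2 * d + α)) * (ρ j + (d + α) / d * ρ (j + 1)) ∧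
      β * d / (2 * d + α) * (ρ (j - 1) - 2 * ρ j + ρ (j + 1)) + f (ρ j) = 0 :=
  stationary_solutions_structure_general α β d hα hd f v ρ hstat
end

section
/- The only bounded nonnegative sequences (ρ_j)_{j∈ℤ} satisfying the discrete Fisher-KPP equation (βd/(2d+α))·(ρ_{j−1} − 2ρ_j + ρ_{j+1}) + f(ρ_j) = 0 for all j ∈ ℤ are the constant sequences ρ_j ≡ 0 and ρ_j ≡ 1. -/
/-!
At a near-maximal site `j` the discrete Laplacian of a sequence bounded above is at most
`2 (sup ρ - ρ j)`, so the equation and continuity of `f` give `f (sup ρ) ≥ 0`; since `f < 0` above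
`1`, this forces `ρ ≤ 1`. Then `f (ρ j) ≥ 0`, so `ρ` is a concave sequence on `ℤ` bounded below,
hence constant, and the constant is a zero of `f` in `[0, 1]`, i.e. `0` or `1`.
-/

open Set Filter Topology

def discreteLaplacian (ρ : ℤ → ℝ) (j : ℤ) : ℝ := ρ (j - 1) - 2 * ρ j + ρ (j + 1)

theorem discreteLaplacian_comp_neg (ρ : ℤ → ℝ) (j : ℤ) :
    discreteLaplacian (fun i => ρ (-i)) j = discreteLaplacian ρ (-j) := by
  simp only [discreteLaplacian, neg_sub', neg_add', sub_neg_eq_add]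
  ring

theorem discreteLaplacian_le_two_mul_iSup_sub {ρ : ℤ → ℝ} (hρ : BddAbove (range ρ)) (j : ℤ) :
    discreteLaplacian ρ j ≤ 2 * ((⨆ i, ρ i) - ρ j) := by
  have := le_ciSup hρ (j - 1)
  have := le_ciSup hρ (j + 1)
  unfold discreteLaplacian
  linarith

theorem map_iSup_nonneg_of_mul_discreteLaplacian_add_eq_zero {ρ : ℤ → ℝ} {f : ℝ → ℝ} {k : ℝ}
    (hk : 0 ≤ k) (hρ : BddAbove (range ρ)) (hf : ContinuousAt f (⨆ i, ρ i))
    (heq : ∀ j, k * discreteLaplacian ρ j + f (ρ j) = 0) :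
    0 ≤ f (⨆ i, ρ i) := by
  obtain ⟨u, -, hu, hu_mem⟩ := exists_seq_tendsto_sSup (range_nonempty ρ) hρ
  choose j hj using hu_mem
  have hρj : Tendsto (fun n => ρ (j n)) atTop (𝓝 (⨆ i, ρ i)) := by
    rw [funext hj]; exact hu
  have hlower : Tendsto (fun n => -(2 * k) * ((⨆ i, ρ i) - ρ (j n))) atTop (𝓝 0) := by
    simpa only [sub_self, mul_zero] using
      ((tendsto_const_nhds (x := ⨆ i, ρ i)).sub hρj).const_mul (-(2 * k))
  refine le_of_tendsto_of_tendsto' hlower (hf.tendsto.comp hρj) fun n => ?_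
  have := mul_le_mul_of_nonneg_left (discreteLaplacian_le_two_mul_iSup_sub hρ (j n)) hk
  have := heq (j n)
  simp only [Function.comp_apply]
  linarith

theorem sub_le_natCast_mul_of_discreteLaplacian_nonpos {ρ : ℤ → ℝ}
    (hΔ : ∀ j, discreteLaplacian ρ j ≤ 0) (j : ℤ) (n : ℕ) :
    ρ (j + n) - ρ j ≤ n * (ρ (j + 1) - ρ j) := by
  have hdiff : Antitone fun i => ρ (i + 1) - ρ i := antitone_int_of_succ_le fun i => by
    have := hΔ (i + 1)
    simp only [discreteLaplacian, add_sub_cancel_right] at this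
    linarith [show i + 1 + 1 = i + 2 by ring]
  induction n with
  | zero => simp
  | succ n ih =>
    have := hdiff (show j ≤ j + n by omega)
    push_cast at this ⊢
    rw [← add_assoc]
    linarith

theorem monotone_of_discreteLaplacian_nonpos_of_bddBelow {ρ : ℤ → ℝ}
    (hΔ : ∀ j, discreteLaplacian ρ j ≤ 0) (hρ : BddBelow (range ρ)) : Monotone ρ := by
  refine monotone_int_of_le_succ fun j => ?_
  by_contra! hdesc
  obtain ⟨b, hb⟩ := hρ
  obtain ⟨n, hn⟩ := exists_nat_gt ((ρ j - b) / (ρ j - ρ (j + 1)))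
  rw [div_lt_iff₀ (by linarith)] at hn
  have := sub_le_natCast_mul_of_discreteLaplacian_nonpos hΔ j n
  have := hb (mem_range_self (j + n))
  linarith

theorem eq_of_discreteLaplacian_nonpos_of_bddBelow {ρ : ℤ → ℝ}
    (hΔ : ∀ j, discreteLaplacian ρ j ≤ 0) (hρ : BddBelow (range ρ)) (i j : ℤ) : ρ i = ρ j := by
  have hmono := monotone_of_discreteLaplacian_nonpos_of_bddBelow hΔ hρ
  have hanti : Antitone ρ := by
    have hneg := monotone_of_discreteLaplacian_nonpos_of_bddBelow (ρ := fun i => ρ (-i))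
      (fun j => (discreteLaplacian_comp_neg ρ j).trans_le (hΔ (-j)))
      (by simpa only [← Function.comp_def, neg_surjective.range_comp] using hρ)
    intro a b hab
    simpa using hneg (neg_le_neg hab)
  rcases le_total i j with h | h
  · exact le_antisymm (hmono h) (hanti h)
  · exact le_antisymm (hanti h) (hmono h)

/-- **Classification of bounded nonnegative solutions of the discrete Fisher-KPP equation**:
the only bounded nonnegative sequences `(ρ_j)` with
`(βd/(2d+α))(ρ_{j-1} - 2ρ_j + ρ_{j+1}) + f(ρ_j) = 0` for all `j` are `ρ ≡ 0` and `ρ ≡ 1`. -/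
theorem discrete_fisher_kpp_stationary
    (α β d : ℝ) (hα : 0 < α) (hβ : 0 < β) (hd : 0 < d)
    (f : ℝ → ℝ) (hf : ContDiff ℝ 1 f) (hf0 : f 0 = 0) (hf1 : f 1 = 0)
    (hfpos : ∀ u ∈ Ioo (0:ℝ) 1, 0 < f u ∧ f u ≤ deriv f 0 * u)
    (hfneg : ∀ u : ℝ, u ∉ Icc (0:ℝ) 1 → f u < 0)
    (ρ : ℤ → ℝ)
    (hbdd : ∃ C : ℝ, ∀ j, |ρ j| ≤ C)
    (hpos : ∀ j, 0 ≤ ρ j)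
    (heq : ∀ j : ℤ, β * d / (2 * d + α) * (ρ (j - 1) - 2 * ρ j + ρ (j + 1)) + f (ρ j) = 0) :
    (∀ j, ρ j = 0) ∨ (∀ j, ρ j = 1) := by
  obtain ⟨C, hC⟩ := hbdd
  have hk : 0 < β * d / (2 * d + α) := by positivity
  have hbddA : BddAbove (range ρ) := ⟨C, by rintro _ ⟨j, rfl⟩; exact (abs_le.mp (hC j)).2⟩
  have hsup_mem : ⨆ i, ρ i ∈ Icc (0:ℝ) 1 := by
    by_contra hout
    exact (hfneg _ hout).not_ge <| map_iSup_nonneg_of_mul_discreteLaplacian_add_eq_zero hk.le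
      hbddA hf.continuous.continuousAt heq
  have hρ_mem j : ρ j ∈ Icc (0:ℝ) 1 := ⟨hpos j, (le_ciSup hbddA j).trans hsup_mem.2⟩
  have hf_nonneg : ∀ u ∈ Icc (0:ℝ) 1, 0 ≤ f u := fun u hu => by
    rcases eq_endpoints_or_mem_Ioo_of_mem_Icc hu with rfl | rfl | hu
    exacts [hf0.ge, hf1.ge, (hfpos u hu).1.le]
  have hconst := eq_of_discreteLaplacian_nonpos_of_bddBelow (ρ := ρ)
    (fun j => nonpos_of_mul_nonpos_right (by
      unfold discreteLaplacian; linarith [heq j, hf_nonneg _ (hρ_mem j)]) hk)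
    ⟨0, by rintro _ ⟨j, rfl⟩; exact hpos j⟩
  have hf_zero : f (ρ 0) = 0 := by
    have := heq 0
    rw [zero_sub, zero_add, hconst (-1) 0, hconst 1 0] at this
    linarith
  rcases eq_endpoints_or_mem_Ioo_of_mem_Icc (hρ_mem 0) with h0 | h1 | hmid
  · exact .inl fun j => (hconst j 0).trans h0
  · exact .inr fun j => (hconst j 0).trans h1
  · exact absurd hf_zero (hfpos _ hmid).1.ne'
end

section
/- The only nonnegative bounded stationary solutions of the asymptotic system, i.e. bounded sequences (V_j, P_j)_{j∈ℤ} of nonnegative reals satisfying 0 = −2α V_j + β(P_j + P_{j+1}) and 0 = f(P_j) + α(V_j + V_{j-1}) − 2β P_j for all j ∈ ℤ, are (V_j, P_j) ≡ (0, 0) and (V_j, P_j) ≡ (β/α, 1). -/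
open Set

/-! Eliminating `V` leaves the discrete stationary equation
`β (P_{j+1} - 2 P_j + P_{j-1}) + 2 f(P_j) = 0`. Where `P > 1` the profile is strictly convex, so a
bounded profile never exceeds `1`: otherwise it would grow without bound on one side. On `[0, 1]`
we have `f ≥ 0`, so `P` is concave, and a concave sequence on `ℤ` that is bounded below is
constant. A constant profile is a zero of `f` in `[0, 1]`, hence `0` or `1`, and the first
equation then determines `V`. -/

section Sequences

variable {α : Type*} [Field α] [LinearOrder α] [IsStrictOrderedRing α] [Archimedean α]

theorem not_bddAbove_range_of_le_sub {Q : ℤ → α} {δ : α} (hδ : 0 < δ) (k : ℤ)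
    (h : ∀ n : ℕ, δ ≤ Q (k + n + 1) - Q (k + n)) : ¬ BddAbove (range Q) := by
  rintro ⟨C, hC⟩
  have growth : ∀ n : ℕ, Q k + n * δ ≤ Q (k + n) := by
    intro n
    induction n with
    | zero => simp
    | succ n ih =>
      have := h n
      push_cast
      rw [← add_assoc]
      linarith
  obtain ⟨n, hn⟩ := exists_nat_gt ((C - Q k) / δ)
  rw [div_lt_iff₀ hδ] at hn
  linarith [growth n, hC (mem_range_self (k + n))]

theorem le_succ_of_concave_of_bddBelow {Q : ℤ → α}
    (hconc : ∀ j, Q (j + 1) - Q j ≤ Q j - Q (j - 1)) (hbdd : BddBelow (range Q)) (j : ℤ) :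
    Q j ≤ Q (j + 1) := by
  by_contra! hdec
  have decreasing : ∀ n : ℕ, Q (j + n + 1) - Q (j + n) ≤ Q (j + 1) - Q j := by
    intro n
    induction n with
    | zero => simp
    | succ n ih =>
      have := hconc (j + n + 1)
      rw [add_sub_cancel_right] at this
      push_cast
      rw [← add_assoc]
      linarith
  refine not_bddAbove_range_of_le_sub (Q := fun i => -Q i) (sub_pos.mpr hdec) j
    (fun n => ?_) hbdd.range_neg
  linarith [decreasing n]

theorem periodic_of_concave_of_bddBelow {Q : ℤ → α}
    (hconc : ∀ j, Q (j + 1) - Q j ≤ Q j - Q (j - 1)) (hbdd : BddBelow (range Q)) :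
    Function.Periodic Q 1 := by
  have hconc_neg : ∀ j, Q (-(j + 1)) - Q (-j) ≤ Q (-j) - Q (-(j - 1)) := by
    intro j
    have := hconc (-j)
    rw [show -j + 1 = -(j - 1) by ring, show -j - 1 = -(j + 1) by ring] at this
    linarith
  intro j
  have hbdd_neg : BddBelow (range fun i => Q (-i)) := hbdd.mono (range_comp_subset_range _ _)
  have := le_succ_of_concave_of_bddBelow hconc_neg hbdd_neg (-(j + 1))
  rw [neg_neg, show -(j + 1) + 1 = -j by ring, neg_neg] at this
  exact le_antisymm this (le_succ_of_concave_of_bddBelow hconc hbdd j)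

end Sequences

theorem nonneg_on_Icc_of_pos_on_Ioo {f : ℝ → ℝ} {a b : ℝ} (ha : f a = 0) (hb : f b = 0)
    (h : ∀ u ∈ Ioo a b, 0 < f u) : ∀ u ∈ Icc a b, 0 ≤ f u := by
  rintro u ⟨hau, hub⟩
  rcases hau.eq_or_lt with rfl | hau
  · exact ha.ge
  rcases hub.eq_or_lt with rfl | hub
  · exact hb.ge
  exact (h u ⟨hau, hub⟩).le

def IsStationaryProfile (β : ℝ) (f : ℝ → ℝ) (Q : ℤ → ℝ) : Prop :=
  ∀ j, β * (Q (j + 1) - 2 * Q j + Q (j - 1)) + 2 * f (Q j) = 0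

namespace IsStationaryProfile

variable {β : ℝ} {f : ℝ → ℝ} {Q : ℤ → ℝ}

theorem comp_neg (hQ : IsStationaryProfile β f Q) :
    IsStationaryProfile β f (fun j => Q (-j)) := by
  intro j
  have := hQ (-j)
  rw [show -j + 1 = -(j - 1) by ring, show -j - 1 = -(j + 1) by ring] at this
  linarith

theorem sub_lt_sub_of_neg (hQ : IsStationaryProfile β f Q) (hβ : 0 < β) {j : ℤ}
    (h : f (Q j) < 0) : Q j - Q (j - 1) < Q (j + 1) - Q j := by
  have := hQ j
  exact lt_of_mul_lt_mul_left (a := β) (by linarith) hβ.le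

theorem sub_le_sub_of_nonneg (hQ : IsStationaryProfile β f Q) (hβ : 0 < β) {j : ℤ}
    (h : 0 ≤ f (Q j)) : Q (j + 1) - Q j ≤ Q j - Q (j - 1) := by
  have := hQ j
  exact le_of_mul_le_mul_left (a := β) (by linarith) hβ

theorem not_bddAbove_of_one_lt_of_le_succ (hQ : IsStationaryProfile β f Q) (hβ : 0 < β)
    (hf : ∀ u, 1 < u → f u < 0) {j : ℤ} (h1 : 1 < Q j) (hle : Q j ≤ Q (j + 1)) :
    ¬ BddAbove (range Q) := by
  have hδ : 0 < Q (j + 1 + 1) - Q (j + 1) := by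
    have := hQ.sub_lt_sub_of_neg hβ (hf _ (h1.trans_le hle))
    rw [add_sub_cancel_right] at this
    linarith
  -- Above level 1 the profile is convex, so once it increases it keeps increasing.
  have convex_ascent : ∀ n : ℕ,
      1 < Q (j + 1 + n) ∧ Q (j + 1 + 1) - Q (j + 1) ≤ Q (j + 1 + n + 1) - Q (j + 1 + n) := by
    intro n
    induction n with
    | zero => simpa using h1.trans_le hle
    | succ n ih =>
      have hQ1 : 1 < Q (j + 1 + n + 1) := by linarith
      have := hQ.sub_lt_sub_of_neg hβ (hf _ hQ1)
      rw [add_sub_cancel_right] at this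
      push_cast
      rw [← add_assoc]
      constructor <;> linarith
  exact not_bddAbove_range_of_le_sub hδ (j + 1) fun n => (convex_ascent n).2

theorem le_one (hQ : IsStationaryProfile β f Q) (hβ : 0 < β) (hf : ∀ u, 1 < u → f u < 0)
    (hbdd : BddAbove (range Q)) (j : ℤ) : Q j ≤ 1 := by
  by_contra! h1
  rcases le_or_gt (Q j) (Q (j + 1)) with hle | hlt
  · exact hQ.not_bddAbove_of_one_lt_of_le_succ hβ hf h1 hle hbdd
  · have hprev : Q j < Q (j - 1) := by
      linarith [hQ.sub_lt_sub_of_neg hβ (hf _ h1)]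
    refine hQ.comp_neg.not_bddAbove_of_one_lt_of_le_succ hβ hf (j := -j) ?_ ?_
      (hbdd.mono (range_comp_subset_range _ _))
    · simpa using h1
    · simpa [show -j + 1 = -(j - 1) by ring] using hprev.le

theorem periodic (hQ : IsStationaryProfile β f Q) (hβ : 0 < β) (hf : ∀ u ∈ Icc 0 1, 0 ≤ f u)
    (h01 : ∀ j, Q j ∈ Icc 0 1) : Function.Periodic Q 1 :=
  periodic_of_concave_of_bddBelow (fun j => hQ.sub_le_sub_of_nonneg hβ (hf _ (h01 j)))
    ⟨0, by rintro _ ⟨j, rfl⟩; exact (h01 j).1⟩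

theorem apply_eq_zero (hQ : IsStationaryProfile β f Q) (hper : Function.Periodic Q 1) (j : ℤ) :
    f (Q j) = 0 := by
  have := hQ j
  rw [hper j, ← hper (j - 1), sub_add_cancel] at this
  linarith

end IsStationaryProfile

theorem asymptotic_stationary_classification_general
    (α β : ℝ) (hα : 0 < α) (hβ : 0 < β)
    (f : ℝ → ℝ) (hf0 : f 0 = 0) (hf1 : f 1 = 0)
    (hfpos : ∀ u ∈ Ioo (0:ℝ) 1, 0 < f u ∧ f u ≤ deriv f 0 * u)
    (hfneg : ∀ u : ℝ, u ∉ Icc (0:ℝ) 1 → f u < 0)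
    (V P : ℤ → ℝ)
    (hbdd : ∃ C : ℝ, ∀ j, |V j| ≤ C ∧ |P j| ≤ C)
    (hpos : ∀ j, 0 ≤ V j ∧ 0 ≤ P j)
    (heqV : ∀ j : ℤ, 0 = -(2 * α) * V j + β * (P j + P (j + 1)))
    (heqP : ∀ j : ℤ, 0 = f (P j) + α * (V j + V (j - 1)) - 2 * β * P j) :
    (∀ j, V j = 0 ∧ P j = 0) ∨ (∀ j, V j = β / α ∧ P j = 1) := by
  have hP : IsStationaryProfile β f P := fun j => by
    have := heqV (j - 1)
    rw [sub_add_cancel] at this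
    linarith [heqV j, heqP j]
  have hf_nonneg := nonneg_on_Icc_of_pos_on_Ioo hf0 hf1 fun u hu => (hfpos u hu).1
  obtain ⟨C, hC⟩ := hbdd
  have hP_le_one := hP.le_one hβ (fun u hu => hfneg u fun h => hu.not_ge h.2)
    ⟨C, by rintro _ ⟨j, rfl⟩; exact (abs_le.mp (hC j).2).2⟩
  have hper := hP.periodic hβ hf_nonneg fun j => ⟨(hpos j).2, hP_le_one j⟩
  have hconst : ∀ j, P j = P 0 := fun j => by simpa using hper.int_mul_eq j
  have hV : ∀ j, V j = β / α * P 0 := fun j => by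
    have := heqV j
    rw [hconst j, hconst (j + 1)] at this
    field_simp
    linarith
  have hroot : P 0 = 0 ∨ P 0 = 1 := by
    by_contra! hne
    exact (hfpos _ ⟨(hpos 0).2.lt_of_ne' hne.1, (hP_le_one 0).lt_of_ne hne.2⟩).1.ne'
      (hP.apply_eq_zero hper 0)
  rcases hroot with h | h
  · exact .inl fun j => ⟨by rw [hV, h, mul_zero], by rw [hconst, h]⟩
  · exact .inr fun j => ⟨by rw [hV, h, mul_one], by rw [hconst, h]⟩

/-- **Stationary solutions of the asymptotic system**: the only nonnegative bounded
sequences satisfying `0 = −2αV_j + β(P_j + P_{j+1})` and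
`0 = f(P_j) + α(V_j + V_{j−1}) − 2βP_j` are `(0,0)` and `(β/α, 1)`. -/
theorem asymptotic_stationary_classification
    (α β : ℝ) (hα : 0 < α) (hβ : 0 < β)
    (f : ℝ → ℝ) (hf : ContDiff ℝ 1 f) (hf0 : f 0 = 0) (hf1 : f 1 = 0)
    (hfpos : ∀ u ∈ Ioo (0:ℝ) 1, 0 < f u ∧ f u ≤ deriv f 0 * u)
    (hfneg : ∀ u : ℝ, u ∉ Icc (0:ℝ) 1 → f u < 0)
    (V P : ℤ → ℝ)
    (hbdd : ∃ C : ℝ, ∀ j, |V j| ≤ C ∧ |P j| ≤ C)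
    (hpos : ∀ j, 0 ≤ V j ∧ 0 ≤ P j)
    (heqV : ∀ j : ℤ, 0 = -(2 * α) * V j + β * (P j + P (j + 1)))
    (heqP : ∀ j : ℤ, 0 = f (P j) + α * (V j + V (j - 1)) - 2 * β * P j) :
    (∀ j, V j = 0 ∧ P j = 0) ∨ (∀ j, V j = β / α ∧ P j = 1) :=
  asymptotic_stationary_classification_general α β hα hβ f hf0 hf1 hfpos hfneg V P hbdd hpos heqV
    heqP
end

section
/- Let (W_j)_{j∈ℤ} and (Q_j)_{j∈ℤ} be families of C¹ functions on [0,∞) satisfying, for all t > 0 and j ∈ ℤ: W_j'(t) ≥ −2α W_j(t) + β(Q_j(t) + Q_{j+1}(t)) and Q_j'(t) ≥ c_j(t) Q_j(t) + α(W_j(t) + W_{j-1}(t)), where the coefficients satisfy sup_{t>0} sup_{j∈ℤ} |c_j(t)| < ∞, and assume W and Q are locally bounded in time. If W_j(0) ≥ 0 and Q_j(0) ≥ 0 for all j ∈ ℤ, then W_j(t) ≥ 0 and Q_j(t) ≥ 0 for all t > 0 and j ∈ ℤ. If, in addition, W(0) ≢ 0 or Q(0) ≢ 0, then W_j(t) >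 0 and Q_j(t) > 0 for all t > 0 and j ∈ ℤ. -/
/-!
Nonnegativity. After multiplication by `exp (K t)` with `K = 2α + C`, every component `g` of
the family `(W_j, Q_j)` satisfies `g' ≥ -L b` whenever `b ≥ 0` and all components are `≥ -b` at
that time; so `b` stands in for the supremum of the negative parts of the infinitely many
components, which never has to be formed. Starting from the a priori bound `-A` given by local
boundedness and integrating repeatedly gives `g(t) ≥ -A (L t)^k / k!` for every `k`, hence
`g ≥ 0`; no first crossing time is needed.

Positivity. By the `Q`-inequality a positive `W_j` makes `Q_j` and `Q_{j+1}` positive, and by the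
`W`-inequality a positive `Q_j` makes `W_j` and `W_{j-1}` positive (integrating factors `exp (C t)`
and `exp (2α t)`). A component with nonzero initial value is positive for `t > 0`, and positivity
spreads from it to every index.
-/

open Set Filter Topology Real
open scoped Nat

section Comparison

variable {f f' : ℝ → ℝ} {K a b : ℝ}

theorem HasDerivAt.exp_const_mul_mul {x d : ℝ} (hf : HasDerivAt f d x) (K : ℝ) :
    HasDerivAt (fun t => Real.exp (K * t) * f t) (Real.exp (K * x) * (d + K * f x)) x := by
  refine (((hasDerivAt_id x).const_mul K).exp.fun_mul hf).congr_deriv ?_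
  simp only [id, mul_one]
  ring

theorem monotoneOn_exp_mul_of_deriv_add_mul_nonneg (hf : ContinuousOn f (Icc a b))
    (hd : ∀ x ∈ Ioo a b, HasDerivAt f (f' x) x) (h : ∀ x ∈ Ioo a b, 0 ≤ f' x + K * f x) :
    MonotoneOn (fun t => exp (K * t) * f t) (Icc a b) := by
  refine monotoneOn_of_hasDerivWithinAt_nonneg (convex_Icc a b) (by fun_prop)
    (f' := fun x => exp (K * x) * (f' x + K * f x))
    (fun x hx => ?_) (fun x hx => ?_) <;> rw [interior_Icc] at *
  · exact ((hd x hx).exp_const_mul_mul K).hasDerivWithinAt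
  · exact mul_nonneg (exp_pos _).le (h x hx)

theorem strictMonoOn_exp_mul_of_deriv_add_mul_pos (hf : ContinuousOn f (Icc a b))
    (hd : ∀ x ∈ Ioo a b, HasDerivAt f (f' x) x) (h : ∀ x ∈ Ioo a b, 0 < f' x + K * f x) :
    StrictMonoOn (fun t => exp (K * t) * f t) (Icc a b) := by
  refine strictMonoOn_of_hasDerivWithinAt_pos (convex_Icc a b) (by fun_prop)
    (f' := fun x => exp (K * x) * (f' x + K * f x))
    (fun x hx => ?_) (fun x hx => ?_) <;> rw [interior_Icc] at *
  · exact ((hd x hx).exp_const_mul_mul K).hasDerivWithinAt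
  · exact mul_pos (exp_pos _) (h x hx)

theorem pos_of_deriv_add_mul_nonneg (hab : a ≤ b) (hf : ContinuousOn f (Icc a b))
    (hd : ∀ x ∈ Ioo a b, HasDerivAt f (f' x) x) (h : ∀ x ∈ Ioo a b, 0 ≤ f' x + K * f x)
    (ha : 0 < f a) : 0 < f b := by
  have hmono := monotoneOn_exp_mul_of_deriv_add_mul_nonneg hf hd h
    (left_mem_Icc.mpr hab) (right_mem_Icc.mpr hab) hab
  exact pos_of_mul_pos_right ((mul_pos (exp_pos _) ha).trans_le hmono) (exp_pos _).le

theorem pos_of_deriv_add_mul_pos (hab : a < b) (hf : ContinuousOn f (Icc a b))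
    (hd : ∀ x ∈ Ioo a b, HasDerivAt f (f' x) x) (h : ∀ x ∈ Ioo a b, 0 < f' x + K * f x)
    (ha : 0 ≤ f a) : 0 < f b := by
  have hmono := strictMonoOn_exp_mul_of_deriv_add_mul_pos hf hd h
    (left_mem_Icc.mpr hab.le) (right_mem_Icc.mpr hab.le) hab
  exact pos_of_mul_pos_right ((mul_nonneg (exp_pos _).le ha).trans_lt hmono) (exp_pos _).le

end Comparison

section FamilyComparison

variable {ι : Type*} {T L A : ℝ}

theorem hasDerivAt_mul_pow_succ_div_factorial (c x : ℝ) (k : ℕ) :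
    HasDerivAt (fun s => c * s ^ (k + 1) / (k + 1)!) (c * x ^ k / k !) x := by
  refine ((hasDerivAt_pow (k + 1) x).const_mul c |>.div_const _).congr_deriv ?_
  rw [Nat.factorial_succ]
  push_cast
  field_simp

theorem neg_mul_pow_div_factorial_le_of_hasDerivAt_ge {g g' : ι → ℝ → ℝ} (hL : 0 ≤ L)
    (hA : 0 ≤ A) (hcont : ∀ i, ContinuousOn (g i) (Icc 0 T))
    (hderiv : ∀ i, ∀ t ∈ Ioo 0 T, HasDerivAt (g i) (g' i t) t)
    (hineq : ∀ t ∈ Ioo 0 T, ∀ b, 0 ≤ b → (∀ j, -b ≤ g j t) → ∀ i, -(L * b) ≤ g' i t)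
    (hinit : ∀ i, 0 ≤ g i 0) (hbdd : ∀ i, ∀ t ∈ Icc 0 T, -A ≤ g i t) (k : ℕ) :
    ∀ i, ∀ t ∈ Icc 0 T, -(A * L ^ k * t ^ k / k !) ≤ g i t := by
  induction k with
  | zero => simpa using hbdd
  | succ k ih =>
    intro i t ht
    have hsub : Icc 0 t ⊆ Icc 0 T := Icc_subset_Icc le_rfl ht.2
    have hmono : MonotoneOn (fun s => g i s + A * L ^ (k + 1) * s ^ (k + 1) / (k + 1)!)
        (Icc 0 t) := by
      refine monotoneOn_of_hasDerivWithinAt_nonneg (convex_Icc 0 t)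
        ((hcont i).mono hsub |>.add (by fun_prop))
        (f' := fun s => g' i s + L * (A * L ^ k * s ^ k / k !)) (fun s hs => ?_) (fun s hs => ?_)
        <;> rw [interior_Icc] at *
      · refine ((hderiv i s (Ioo_subset_Ioo_right ht.2 hs)).add
          (hasDerivAt_mul_pow_succ_div_factorial _ s k)).hasDerivWithinAt.congr_deriv ?_
        ring
      · have hs' : s ∈ Icc 0 T := hsub (Ioo_subset_Icc_self hs)
        have hs0 := hs'.1
        have := hineq s (Ioo_subset_Ioo_right ht.2 hs) _ (by positivity) (ih · s hs') i
        linarith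
    have := hmono (left_mem_Icc.mpr ht.1) (right_mem_Icc.mpr ht.1) ht.1
    norm_num at this
    linarith [hinit i]

theorem nonneg_of_hasDerivAt_ge_neg_mul_lowerBound {g g' : ι → ℝ → ℝ} (hL : 0 ≤ L)
    (hA : 0 ≤ A) (hcont : ∀ i, ContinuousOn (g i) (Icc 0 T))
    (hderiv : ∀ i, ∀ t ∈ Ioo 0 T, HasDerivAt (g i) (g' i t) t)
    (hineq : ∀ t ∈ Ioo 0 T, ∀ b, 0 ≤ b → (∀ j, -b ≤ g j t) → ∀ i, -(L * b) ≤ g' i t)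
    (hinit : ∀ i, 0 ≤ g i 0) (hbdd : ∀ i, ∀ t ∈ Icc 0 T, -A ≤ g i t) :
    ∀ i, ∀ t ∈ Icc 0 T, 0 ≤ g i t := by
  intro i t ht
  have hlim : Tendsto (fun k : ℕ => -(A * ((L * t) ^ k / k !))) atTop (𝓝 0) := by
    simpa using ((FloorSemiring.tendsto_pow_div_factorial_atTop (L * t)).const_mul A).neg
  refine le_of_tendsto' hlim fun k => ?_
  calc -(A * ((L * t) ^ k / k !)) = -(A * L ^ k * t ^ k / k !) := by ring
    _ ≤ g i t :=
      neg_mul_pow_div_factorial_le_of_hasDerivAt_ge hL hA hcont hderiv hineq hinit hbdd k i t ht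

theorem nonneg_of_hasDerivAt_add_mul_ge_neg_mul_lowerBound {f f' : ι → ℝ → ℝ} {K : ℝ}
    (hL : 0 ≤ L) (hcont : ∀ i, ContinuousOn (f i) (Icc 0 T))
    (hderiv : ∀ i, ∀ t ∈ Ioo 0 T, HasDerivAt (f i) (f' i t) t)
    (hineq : ∀ t ∈ Ioo 0 T, ∀ b, 0 ≤ b → (∀ j, -b ≤ f j t) → ∀ i, -(L * b) ≤ f' i t + K * f i t)
    (hinit : ∀ i, 0 ≤ f i 0) (hbdd : ∀ i, ∀ t ∈ Icc 0 T, -A ≤ f i t) :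
    ∀ i, ∀ t ∈ Icc 0 T, 0 ≤ f i t := by
  have hweighted := nonneg_of_hasDerivAt_ge_neg_mul_lowerBound (g := fun i t => exp (K * t) * f i t)
    (g' := fun i t => exp (K * t) * (f' i t + K * f i t)) (A := |A| * exp (|K| * T)) hL
    (by positivity) (fun i => by fun_prop) (fun i t ht => (hderiv i t ht).exp_const_mul_mul K)
    ?_ (by simpa using hinit) ?_
  · exact fun i t ht => nonneg_of_mul_nonneg_right (hweighted i t ht) (exp_pos _)
  · intro t ht b hb hlow i
    have hlow' : ∀ j, -(b / exp (K * t)) ≤ f j t := fun j => by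
      rw [← neg_div, div_le_iff₀ (exp_pos _)]
      linarith [hlow j]
    calc -(L * b) = exp (K * t) * -(L * (b / exp (K * t))) := by field_simp
      _ ≤ exp (K * t) * (f' i t + K * f i t) :=
        mul_le_mul_of_nonneg_left (hineq t ht _ (by positivity) hlow' i) (exp_pos _).le
  · intro i t ht
    have hexp : exp (K * t) ≤ exp (|K| * T) :=
      exp_le_exp.mpr (by nlinarith [le_abs_self K, abs_nonneg K, ht.1, ht.2])
    calc -(|A| * exp (|K| * T)) ≤ -(|A| * exp (K * t)) := by gcongr
      _ = exp (K * t) * -|A| := by ring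
      _ ≤ exp (K * t) * f i t := by gcongr; linarith [le_abs_self A, hbdd i t ht]

end FamilyComparison

structure IsAsymptoticSupersolution (α β : ℝ) (c W Q : ℤ → ℝ → ℝ) : Prop where
  contDiffOn : ∀ j, ContDiffOn ℝ 1 (W j) (Ici 0) ∧ ContDiffOn ℝ 1 (Q j) (Ici 0)
  deriv_W_ge : ∀ j : ℤ, ∀ t : ℝ, 0 < t →
    -(2 * α) * W j t + β * (Q j t + Q (j + 1) t) ≤ deriv (W j) t
  deriv_Q_ge : ∀ j : ℤ, ∀ t : ℝ, 0 < t →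
    c j t * Q j t + α * (W j t + W (j - 1) t) ≤ deriv (Q j) t

namespace IsAsymptoticSupersolution

variable {α β : ℝ} {c W Q : ℤ → ℝ → ℝ}

theorem continuousOn_W (h : IsAsymptoticSupersolution α β c W Q) (j : ℤ) (t : ℝ) :
    ContinuousOn (W j) (Icc 0 t) :=
  (h.contDiffOn j).1.continuousOn.mono Icc_subset_Ici_self

theorem continuousOn_Q (h : IsAsymptoticSupersolution α β c W Q) (j : ℤ) (t : ℝ) :
    ContinuousOn (Q j) (Icc 0 t) :=
  (h.contDiffOn j).2.continuousOn.mono Icc_subset_Ici_self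

theorem hasDerivAt_W (h : IsAsymptoticSupersolution α β c W Q) (j : ℤ) {t : ℝ} (ht : 0 < t) :
    HasDerivAt (W j) (deriv (W j) t) t :=
  (((h.contDiffOn j).1.contDiffAt (Ici_mem_nhds ht)).differentiableAt one_ne_zero).hasDerivAt

theorem hasDerivAt_Q (h : IsAsymptoticSupersolution α β c W Q) (j : ℤ) {t : ℝ} (ht : 0 < t) :
    HasDerivAt (Q j) (deriv (Q j) t) t :=
  (((h.contDiffOn j).2.contDiffAt (Ici_mem_nhds ht)).differentiableAt one_ne_zero).hasDerivAt

theorem nonneg (h : IsAsymptoticSupersolution α β c W Q) (hα : 0 ≤ α) (hβ : 0 ≤ β)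
    (hc : ∃ C : ℝ, ∀ t : ℝ, 0 < t → ∀ j : ℤ, |c j t| ≤ C)
    (hloc : ∀ T : ℝ, 0 < T → ∃ C : ℝ, ∀ j, ∀ t ∈ Icc (0:ℝ) T, |W j t| ≤ C ∧ |Q j t| ≤ C)
    (hinit : ∀ j, 0 ≤ W j 0 ∧ 0 ≤ Q j 0) (j : ℤ) (t : ℝ) (ht : 0 ≤ t) :
    0 ≤ W j t ∧ 0 ≤ Q j t := by
  rcases ht.eq_or_lt with rfl | ht
  · exact hinit j
  obtain ⟨C, hC⟩ := hc
  have hC0 : 0 ≤ C := (abs_nonneg _).trans (hC 1 one_pos 0)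
  obtain ⟨A, hA⟩ := hloc t ht
  -- `W` and `Q` form one family indexed by `ℤ ⊕ ℤ`; `K = 2α + C` makes `c_j + K ≥ 0`.
  have key := nonneg_of_hasDerivAt_add_mul_ge_neg_mul_lowerBound (f := Sum.elim W Q)
    (f' := Sum.elim (fun j => deriv (W j)) (fun j => deriv (Q j))) (K := 2 * α + C)
    (L := 4 * α + 2 * β + 2 * C) (A := A) (T := t) (by positivity)
    (by rintro (j | j) <;> simp [h.continuousOn_W, h.continuousOn_Q])
    (by rintro (j | j) s hs <;> simp [h.hasDerivAt_W j hs.1, h.hasDerivAt_Q j hs.1])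
    ?_ (by rintro (j | j) <;> simp [hinit j])
    (by rintro (j | j) s hs <;> simp [(abs_le.mp (hA j s hs).1).1, (abs_le.mp (hA j s hs).2).1])
  · exact ⟨key (.inl j) t ⟨ht.le, le_rfl⟩, key (.inr j) t ⟨ht.le, le_rfl⟩⟩
  · rintro s hs b hb hlow (i | i)
    · have hW := hlow (.inl i)
      have hQ := hlow (.inr i)
      have hQ' := hlow (.inr (i + 1))
      simp only [Sum.elim_inl, Sum.elim_inr] at *
      nlinarith [h.deriv_W_ge i s hs.1, mul_nonneg hC0 hb, mul_nonneg hα hb]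
    · have hQ := hlow (.inr i)
      have hW := hlow (.inl i)
      have hW' := hlow (.inl (i - 1))
      have hci := abs_le.mp (hC s hs.1 i)
      simp only [Sum.elim_inl, Sum.elim_inr] at *
      nlinarith [h.deriv_Q_ge i s hs.1, mul_nonneg hC0 hb, mul_nonneg hβ hb]

theorem W_pos_of_init_pos (h : IsAsymptoticSupersolution α β c W Q) (hβ : 0 ≤ β)
    (hnn : ∀ j, ∀ t : ℝ, 0 ≤ t → 0 ≤ W j t ∧ 0 ≤ Q j t) {i : ℤ} (hi : 0 < W i 0) {t : ℝ}
    (ht : 0 < t) : 0 < W i t :=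
  pos_of_deriv_add_mul_nonneg (K := 2 * α) ht.le (h.continuousOn_W i t)
    (fun s hs => h.hasDerivAt_W i hs.1) (fun s hs => by
      nlinarith [h.deriv_W_ge i s hs.1, (hnn i s hs.1.le).2, (hnn (i + 1) s hs.1.le).2]) hi

theorem Q_pos_of_init_pos (h : IsAsymptoticSupersolution α β c W Q) (hα : 0 ≤ α)
    (hc : ∃ C : ℝ, ∀ t : ℝ, 0 < t → ∀ j : ℤ, |c j t| ≤ C)
    (hnn : ∀ j, ∀ t : ℝ, 0 ≤ t → 0 ≤ W j t ∧ 0 ≤ Q j t) {i : ℤ} (hi : 0 < Q i 0) {t : ℝ}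
    (ht : 0 < t) : 0 < Q i t := by
  obtain ⟨C, hC⟩ := hc
  refine pos_of_deriv_add_mul_nonneg (K := C) ht.le (h.continuousOn_Q i t)
    (fun s hs => h.hasDerivAt_Q i hs.1) (fun s hs => ?_) hi
  have hcC : 0 ≤ c i s + C := by linarith [(abs_le.mp (hC s hs.1 i)).1]
  nlinarith [h.deriv_Q_ge i s hs.1, mul_nonneg hcC (hnn i s hs.1.le).2, (hnn i s hs.1.le).1,
    (hnn (i - 1) s hs.1.le).1]

theorem W_pos_of_Q_add_pos (h : IsAsymptoticSupersolution α β c W Q) (hβ : 0 < β)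
    (hnn : ∀ j, ∀ t : ℝ, 0 ≤ t → 0 ≤ W j t ∧ 0 ≤ Q j t) {i : ℤ}
    (hQ : ∀ t : ℝ, 0 < t → 0 < Q i t + Q (i + 1) t) {t : ℝ} (ht : 0 < t) : 0 < W i t :=
  pos_of_deriv_add_mul_pos (K := 2 * α) ht (h.continuousOn_W i t)
    (fun s hs => h.hasDerivAt_W i hs.1)
    (fun s hs => by nlinarith [h.deriv_W_ge i s hs.1, mul_pos hβ (hQ s hs.1)]) (hnn i 0 le_rfl).1

theorem Q_pos_of_W_add_pos (h : IsAsymptoticSupersolution α β c W Q) (hα : 0 < α)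
    (hc : ∃ C : ℝ, ∀ t : ℝ, 0 < t → ∀ j : ℤ, |c j t| ≤ C)
    (hnn : ∀ j, ∀ t : ℝ, 0 ≤ t → 0 ≤ W j t ∧ 0 ≤ Q j t) {i : ℤ}
    (hW : ∀ t : ℝ, 0 < t → 0 < W i t + W (i - 1) t) {t : ℝ} (ht : 0 < t) : 0 < Q i t := by
  obtain ⟨C, hC⟩ := hc
  refine pos_of_deriv_add_mul_pos (K := C) ht (h.continuousOn_Q i t)
    (fun s hs => h.hasDerivAt_Q i hs.1) (fun s hs => ?_) (hnn i 0 le_rfl).2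
  have hcC : 0 ≤ c i s + C := by linarith [(abs_le.mp (hC s hs.1 i)).1]
  nlinarith [h.deriv_Q_ge i s hs.1, mul_nonneg hcC (hnn i s hs.1.le).2, mul_pos hα (hW s hs.1)]

theorem W_succ_pos (h : IsAsymptoticSupersolution α β c W Q) (hα : 0 < α) (hβ : 0 < β)
    (hc : ∃ C : ℝ, ∀ t : ℝ, 0 < t → ∀ j : ℤ, |c j t| ≤ C)
    (hnn : ∀ j, ∀ t : ℝ, 0 ≤ t → 0 ≤ W j t ∧ 0 ≤ Q j t) {i : ℤ}
    (hW : ∀ t : ℝ, 0 < t → 0 < W i t) {t : ℝ} (ht : 0 < t) : 0 < W (i + 1) t := by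
  have hQ : ∀ s : ℝ, 0 < s → 0 < Q (i + 1) s := fun s hs =>
    h.Q_pos_of_W_add_pos hα hc hnn (fun r hr => by
      simpa using add_pos_of_nonneg_of_pos (hnn (i + 1) r hr.le).1 (hW r hr)) hs
  exact h.W_pos_of_Q_add_pos hβ hnn
    (fun s hs => add_pos_of_pos_of_nonneg (hQ s hs) (hnn _ s hs.le).2) ht

theorem W_pred_pos (h : IsAsymptoticSupersolution α β c W Q) (hα : 0 < α) (hβ : 0 < β)
    (hc : ∃ C : ℝ, ∀ t : ℝ, 0 < t → ∀ j : ℤ, |c j t| ≤ C)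
    (hnn : ∀ j, ∀ t : ℝ, 0 ≤ t → 0 ≤ W j t ∧ 0 ≤ Q j t) {i : ℤ}
    (hW : ∀ t : ℝ, 0 < t → 0 < W i t) {t : ℝ} (ht : 0 < t) : 0 < W (i - 1) t := by
  have hQ : ∀ s : ℝ, 0 < s → 0 < Q i s := fun s hs =>
    h.Q_pos_of_W_add_pos hα hc hnn
      (fun r hr => add_pos_of_pos_of_nonneg (hW r hr) (hnn (i - 1) r hr.le).1) hs
  exact h.W_pos_of_Q_add_pos hβ hnn (fun s hs => by
    simpa using add_pos_of_nonneg_of_pos (hnn (i - 1) s hs.le).2 (hQ s hs)) ht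

theorem pos (h : IsAsymptoticSupersolution α β c W Q) (hα : 0 < α) (hβ : 0 < β)
    (hc : ∃ C : ℝ, ∀ t : ℝ, 0 < t → ∀ j : ℤ, |c j t| ≤ C)
    (hnn : ∀ j, ∀ t : ℝ, 0 ≤ t → 0 ≤ W j t ∧ 0 ≤ Q j t)
    (hne : (∃ j, W j 0 ≠ 0) ∨ (∃ j, Q j 0 ≠ 0)) (j : ℤ) {t : ℝ} (ht : 0 < t) :
    0 < W j t ∧ 0 < Q j t := by
  obtain ⟨j₀, hj₀⟩ : ∃ j₀, ∀ t : ℝ, 0 < t → 0 < W j₀ t := by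
    rcases hne with ⟨j₀, hW⟩ | ⟨j₀, hQ⟩
    · exact ⟨j₀, fun t => h.W_pos_of_init_pos hβ.le hnn ((hnn j₀ 0 le_rfl).1.lt_of_ne' hW)⟩
    · have hQpos := fun t => h.Q_pos_of_init_pos hα.le hc hnn
        ((hnn j₀ 0 le_rfl).2.lt_of_ne' hQ) (t := t)
      exact ⟨j₀, fun t => h.W_pos_of_Q_add_pos hβ hnn
        (fun s hs => add_pos_of_pos_of_nonneg (hQpos s hs) (hnn _ s hs.le).2)⟩
  have hW : ∀ i, ∀ t : ℝ, 0 < t → 0 < W i t := fun i =>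
    Int.inductionOn' i j₀ hj₀ (fun _ _ hi _ => h.W_succ_pos hα hβ hc hnn hi)
      (fun _ _ hi _ => h.W_pred_pos hα hβ hc hnn hi)
  exact ⟨hW j t ht, h.Q_pos_of_W_add_pos hα hc hnn
    (fun s hs => add_pos_of_pos_of_nonneg (hW j s hs) (hnn _ s hs.le).1) ht⟩

end IsAsymptoticSupersolution

/-- **Positivity principle for the asymptotic system** (Proposition B.5): families of `C¹`
functions `(W,Q)` satisfying the differential inequalities of the asymptotic system with
uniformly bounded coefficients `c_j(t)` and nonnegative initial data remain nonnegative, and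
become positive for positive times if the initial data is not identically zero. -/
theorem asymptotic_positivity_principle
    (α β : ℝ) (hα : 0 < α) (hβ : 0 < β)
    (W Q : ℤ → ℝ → ℝ) (c : ℤ → ℝ → ℝ)
    (hreg : ∀ j, ContDiffOn ℝ 1 (W j) (Ici 0) ∧ ContDiffOn ℝ 1 (Q j) (Ici 0))
    (hc : ∃ C : ℝ, ∀ t : ℝ, 0 < t → ∀ j : ℤ, |c j t| ≤ C)
    (hloc : ∀ T : ℝ, 0 < T → ∃ C : ℝ, ∀ j, ∀ t ∈ Icc (0:ℝ) T, |W j t| ≤ C ∧ |Q j t| ≤ C)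
    (hineqW : ∀ j : ℤ, ∀ t : ℝ, 0 < t →
      -(2 * α) * W j t + β * (Q j t + Q (j + 1) t) ≤ deriv (W j) t)
    (hineqQ : ∀ j : ℤ, ∀ t : ℝ, 0 < t →
      c j t * Q j t + α * (W j t + W (j - 1) t) ≤ deriv (Q j) t)
    (hinit : ∀ j, 0 ≤ W j 0 ∧ 0 ≤ Q j 0) :
    (∀ j, ∀ t : ℝ, 0 < t → 0 ≤ W j t ∧ 0 ≤ Q j t) ∧
    (((∃ j, W j 0 ≠ 0) ∨ (∃ j, Q j 0 ≠ 0)) →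
      ∀ j, ∀ t : ℝ, 0 < t → 0 < W j t ∧ 0 < Q j t) := by
  have h : IsAsymptoticSupersolution α β c W Q := ⟨hreg, hineqW, hineqQ⟩
  have hnn := h.nonneg hα.le hβ.le hc hloc hinit
  exact ⟨fun j t ht => hnn j t ht.le, fun hne j t ht => h.pos hα hβ hc hnn hne j ht⟩
end
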